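/- In the economy with three goods {apple, banana, coconut}, three agents with quasilinear utility and valuations V1(x) = 3·min{x_a, x_b}, V2(x) = 3·min{x_b, x_c}, V3(x) = 3·min{x_a, x_b, x_c} on bundles x ∈ {0,1}^3, and total endowment (1,1,1), a competitive equilibrium exists: there exist a price vector p ∈ ℝ^3 and an allocation (x^1, x^2, x^3) with x^1 + x^2 + x^3 = (1,1,1) such that each x^j maximizes V^j(x) − p·x over {0,1}^3. -/
import Mathlib


def dot3 (p : Fin 3 → ℝ) (x : Fin 3 → ℕ) : ℝ := ∑ i, p i * (x i : ℝ)

def Va (x : Fin 3 → ℕ) : ℝ := 3 * min (x 0 : ℝ) (x 1 : ℝ)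
def Vb (x : Fin 3 → ℕ) : ℝ := 3 * min (x 1 : ℝ) (x 2 : ℝ)
def Vc (x : Fin 3 → ℕ) : ℝ := 3 * min (min (x 0 : ℝ) (x 1 : ℝ)) (x 2 : ℝ)

/-- In the consecutive-games variant, a competitive equilibrium exists. -/
theorem equilibrium_exists_consecutive :
    ∃ (p : Fin 3 → ℝ) (x1 x2 x3 : Fin 3 → ℕ),
      (∀ i, x1 i ≤ 1) ∧ (∀ i, x2 i ≤ 1) ∧ (∀ i, x3 i ≤ 1) ∧
      (∀ i, x1 i + x2 i + x3 i = 1) ∧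
      (∀ y : Fin 3 → ℕ, (∀ i, y i ≤ 1) → Va y - dot3 p y ≤ Va x1 - dot3 p x1) ∧
      (∀ y : Fin 3 → ℕ, (∀ i, y i ≤ 1) → Vb y - dot3 p y ≤ Vb x2 - dot3 p x2) ∧
      (∀ y : Fin 3 → ℕ, (∀ i, y i ≤ 1) → Vc y - dot3 p y ≤ Vc x3 - dot3 p x3) := by
  refine ⟨![0, 3, 0], 0, 0, fun _ => 1, fun i => by simp, fun i => by simp,
    fun i => le_refl 1, fun i => by simp, ?_, ?_, ?_⟩ <;>
  · intro y hy
    have h0 := hy 0; have h1 := hy 1; have h2 := hy 2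
    interval_cases h0 : y 0 <;> interval_cases h1 : y 1 <;> interval_cases h2 : y 2 <;>
      simp [Va, Vb, Vc, dot3, Fin.sum_univ_three, h0, h1, h2] <;> norm_num
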